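/- For the square-graph two-particle Hamiltonian H(s,t) (the explicit 6×6 real symmetric matrix below), whenever |s| > |t| the vector Ψ_A(s) = (1+α(s)²)^{-1}(0, α(s), α(s)², 1, α(s), 0) with α(s) = -s + √(1+s²) is a non-degenerate ground state with eigenvalue 4 - 2√(1+s²), independent of t. Hence for fixed s ≠ 0 all potentials parametrized by t ∈ (-|s|, |s|) yield the same ground state, violating the Hohenberg–Kohn theorem with a non-degenerate ground state whose density has no zero or full occupation. -/

import Mathlib

open scoped BigOperators

noncomputable def sqAlpha (s : ℝ) : ℝ := -s + Real.sqrt (1 + s ^ 2)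

/-- The square-graph two-particle Hamiltonian `H(s,t)` in the ordered basis
`e₁∧e₂, e₁∧e₃, e₁∧e₄, e₂∧e₃, e₂∧e₄, e₃∧e₄`. -/
noncomputable def Hsq (s t : ℝ) : Matrix (Fin 6) (Fin 6) ℝ :=
  (4 : ℝ) • (1 : Matrix (Fin 6) (Fin 6) ℝ) +
    Matrix.of ![![2*t, -1, 0, 0, 1, 0],
                ![-1, 0, -1, -1, 0, 1],
                ![0, -1, 2*s, 0, -1, 0],
                ![0, -1, 0, -2*s, -1, 0],
                ![1, 0, -1, -1, 0, -1],
                ![0, 1, 0, 0, -1, -2*t]]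

noncomputable def PsiA (s : ℝ) : Fin 6 → ℝ :=
  fun i => (1 / (1 + sqAlpha s ^ 2)) * ![0, sqAlpha s, sqAlpha s ^ 2, 1, sqAlpha s, 0] i

/-!
`H(s,t)` is symmetric and all six of its eigenvectors are explicit: in the coordinates
`(x₁ + x₄, x₂, x₃)` and `(x₁ - x₄, x₀, x₅)`, `H - 4` splits into an `s`-block and a `t`-block
with eigenvalues `±2√(1+s²), 0` and `±2√(1+t²), 0`.
For `|t| < |s|` the eigenvalue `4 - 2√(1+s²)` is strictly below the other five, so an
eigenvector for any `μ ≤ 4 - 2√(1+s²)` is orthogonal to the other five eigenvectors, which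
confines it to the line through `Ψ_A(s)`.
-/

open Matrix

theorem Matrix.dotProduct_eq_zero_of_mulVec_eq_smul {n R : Type*} [Fintype n] [CommRing R]
    [NoZeroDivisors R] {A : Matrix n n R} (hA : A.IsSymm) {v x : n → R} {l m : R}
    (hv : A *ᵥ v = l • v) (hx : A *ᵥ x = m • x) (hlm : l ≠ m) : v ⬝ᵥ x = 0 := by
  have h : l • (v ⬝ᵥ x) = m • (v ⬝ᵥ x) := by
    rw [← smul_dotProduct, ← hv, ← dotProduct_smul, ← hx, dotProduct_mulVec,
      ← mulVec_transpose, hA.eq]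
  have h' : (l - m) * (v ⬝ᵥ x) = 0 := by rw [sub_mul, sub_eq_zero]; exact h
  exact (mul_eq_zero.mp h').resolve_left (sub_ne_zero.mpr hlm)

theorem Hsq_isSymm (s t : ℝ) : (Hsq s t).IsSymm := by
  ext i j
  fin_cases i <;> fin_cases j <;> simp [Hsq]

theorem Hsq_mulVec (s t : ℝ) (x : Fin 6 → ℝ) :
    Hsq s t *ᵥ x = ![(4 + 2 * t) * x 0 - x 1 + x 4, -x 0 + 4 * x 1 - x 2 - x 3 + x 5,
      -x 1 + (4 + 2 * s) * x 2 - x 4, -x 1 + (4 - 2 * s) * x 3 - x 4,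
      x 0 - x 2 - x 3 + 4 * x 4 - x 5, x 1 - x 4 + (4 - 2 * t) * x 5] := by
  ext i
  fin_cases i <;> simp [Hsq, mulVec, dotProduct, Fin.sum_univ_six] <;> ring

/- For either root `r` of `r² = 1 + s²`, `eigvecS s r` is an eigenvector of `H(s,t)` for
`4 - 2r`, so the two signs of `r` give both non-zero modes of the `s`-block; likewise for
`eigvecT t q`. The vectors `kerVecS s` and `kerVecT t` span the eigenspace for `4`. -/

def eigvecS (s r : ℝ) : Fin 6 → ℝ := ![0, r - s, (r - s) ^ 2, 1, r - s, 0]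

def eigvecT (t q : ℝ) : Fin 6 → ℝ := ![-(q - t) ^ 2, -(q - t), 0, 0, q - t, 1]

def kerVecS (s : ℝ) : Fin 6 → ℝ := ![0, s, 1, -1, s, 0]

def kerVecT (t : ℝ) : Fin 6 → ℝ := ![1, t, 0, 0, -t, 1]

theorem Hsq_mulVec_eigvecS {s r : ℝ} (t : ℝ) (hr : r ^ 2 = 1 + s ^ 2) :
    Hsq s t *ᵥ eigvecS s r = (4 - 2 * r) • eigvecS s r := by
  rw [Hsq_mulVec]
  ext i
  fin_cases i <;> simp only [eigvecS, Pi.smul_apply, smul_eq_mul, cons_val_zero, cons_val_one,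
    cons_val, Fin.isValue, Fin.zero_eta, Fin.mk_one, Fin.reduceFinMk] <;> grind

theorem Hsq_mulVec_eigvecT (s : ℝ) {t q : ℝ} (hq : q ^ 2 = 1 + t ^ 2) :
    Hsq s t *ᵥ eigvecT t q = (4 - 2 * q) • eigvecT t q := by
  rw [Hsq_mulVec]
  ext i
  fin_cases i <;> simp only [eigvecT, Pi.smul_apply, smul_eq_mul, cons_val_zero, cons_val_one,
    cons_val, Fin.isValue, Fin.zero_eta, Fin.mk_one, Fin.reduceFinMk] <;> grind

theorem Hsq_mulVec_kerVecS (s t : ℝ) : Hsq s t *ᵥ kerVecS s = (4 : ℝ) • kerVecS s := by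
  rw [Hsq_mulVec]
  ext i
  fin_cases i <;> simp only [kerVecS, Pi.smul_apply, smul_eq_mul, cons_val_zero, cons_val_one,
    cons_val, Fin.isValue, Fin.zero_eta, Fin.mk_one, Fin.reduceFinMk] <;> ring

theorem Hsq_mulVec_kerVecT (s t : ℝ) : Hsq s t *ᵥ kerVecT t = (4 : ℝ) • kerVecT t := by
  rw [Hsq_mulVec]
  ext i
  fin_cases i <;> simp only [kerVecT, Pi.smul_apply, smul_eq_mul, cons_val_zero, cons_val_one,
    cons_val, Fin.isValue, Fin.zero_eta, Fin.mk_one, Fin.reduceFinMk] <;> ring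

theorem eq_smul_eigvecS_of_dotProduct_eq_zero {s t r q : ℝ} (hr : r ^ 2 = 1 + s ^ 2)
    (hq : q ^ 2 = 1 + t ^ 2) {x : Fin 6 → ℝ} (hS : eigvecS s (-r) ⬝ᵥ x = 0)
    (hT : eigvecT t q ⬝ᵥ x = 0) (hT' : eigvecT t (-q) ⬝ᵥ x = 0)
    (hKS : kerVecS s ⬝ᵥ x = 0) (hKT : kerVecT t ⬝ᵥ x = 0) :
    x = x 3 • eigvecS s r := by
  simp only [eigvecS, eigvecT, kerVecS, kerVecT, dotProduct, Fin.sum_univ_six, Fin.isValue,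
    cons_val_zero, cons_val_one, cons_val, zero_mul, one_mul, zero_add, add_zero] at hS hT hT' hKS hKT
  have hr0 : r ≠ 0 := by rintro rfl; nlinarith
  have hq0 : q ≠ 0 := by rintro rfl; nlinarith
  have hx0 : x 0 = 0 := by
    have h : (q ^ 2 + t ^ 2 + 1) * x 0 = 0 := by linear_combination (hT + hT' - 2 * hKT) / (-2)
    exact (mul_eq_zero.mp h).resolve_left (by positivity)
  have hx14 : x 1 = x 4 := by
    have h : q * (x 1 - x 4) = 0 := by linear_combination (hT' - hT) / 2 + 2 * q * t * hx0
    linarith [(mul_eq_zero.mp h).resolve_left hq0]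
  have hx5 : x 5 = 0 := by linear_combination hKT - hx0 - t * hx14
  -- `(r - s)(r + s) = 1` turns `(r - s)² · hS` into an equation with no `r + s` left
  have hx1 : x 1 = (r - s) * x 3 := by
    have h : r * (x 1 - (r - s) * x 3) = 0 := by
      linear_combination (-(r - s) ^ 2 * hS + hKS + r * hx14 +
        (-x 3 - (r - s) * (x 1 + x 4) + (1 + r ^ 2 - s ^ 2) * x 2) * hr) / 2
    linarith [(mul_eq_zero.mp h).resolve_left hr0]
  have hx2 : x 2 = (r - s) ^ 2 * x 3 := by
    linear_combination hKS - 2 * s * hx1 + s * hx14 - x 3 * hr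
  ext i
  fin_cases i <;> simp [eigvecS] <;> linarith

theorem Hsq_eigenvector_eq_smul {s t r q μ : ℝ} (hr : r ^ 2 = 1 + s ^ 2)
    (hq : q ^ 2 = 1 + t ^ 2) {x : Fin 6 → ℝ} (hx : Hsq s t *ᵥ x = μ • x)
    (hμS : μ ≠ 4 + 2 * r) (hμT : μ ≠ 4 - 2 * q) (hμT' : μ ≠ 4 + 2 * q) (hμK : μ ≠ 4) :
    x = x 3 • eigvecS s r := by
  have orth {v : Fin 6 → ℝ} {l : ℝ} (hv : Hsq s t *ᵥ v = l • v) (hl : l ≠ μ) : v ⬝ᵥ x = 0 :=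
    dotProduct_eq_zero_of_mulVec_eq_smul (Hsq_isSymm s t) hv hx hl
  refine eq_smul_eigvecS_of_dotProduct_eq_zero hr hq
    (orth (Hsq_mulVec_eigvecS t (by rw [neg_sq, hr])) ?_) (orth (Hsq_mulVec_eigvecT s hq) ?_)
    (orth (Hsq_mulVec_eigvecT s (by rw [neg_sq, hq])) ?_) (orth (Hsq_mulVec_kerVecS s t) ?_)
    (orth (Hsq_mulVec_kerVecT s t) ?_)
  all_goals grind

theorem sqAlpha_pos (s : ℝ) : 0 < sqAlpha s := by
  have h := Real.sq_sqrt (by positivity : (0 : ℝ) ≤ 1 + s ^ 2)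
  have := Real.sqrt_nonneg (1 + s ^ 2)
  rw [sqAlpha]
  nlinarith

theorem PsiA_eq_smul_eigvecS (s : ℝ) :
    PsiA s = (1 + sqAlpha s ^ 2)⁻¹ • eigvecS s (Real.sqrt (1 + s ^ 2)) := by
  ext i
  fin_cases i <;> simp [PsiA, eigvecS, sqAlpha, sub_eq_neg_add]

-- The four occupations are `α²/(1+α²)` and `1/(1+α²)` with `α = sqAlpha s > 0`.
theorem PsiA_occupations_mem_Ioo (s : ℝ) :
    ∀ r ∈ ({PsiA s 0 ^ 2 + PsiA s 1 ^ 2 + PsiA s 2 ^ 2,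
              PsiA s 0 ^ 2 + PsiA s 3 ^ 2 + PsiA s 4 ^ 2,
              PsiA s 1 ^ 2 + PsiA s 3 ^ 2 + PsiA s 5 ^ 2,
              PsiA s 2 ^ 2 + PsiA s 4 ^ 2 + PsiA s 5 ^ 2} : Set ℝ), 0 < r ∧ r < 1 := by
  have ha := sqAlpha_pos s
  simp only [Set.mem_insert_iff, Set.mem_singleton_iff]
  rintro r (rfl | rfl | rfl | rfl) <;>
    simp only [PsiA, one_div, Fin.isValue, cons_val_zero, cons_val_one, cons_val, mul_zero,
      mul_one, inv_pow, ne_eq, OfNat.ofNat_ne_zero, not_false_eq_true, zero_pow, zero_add,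
      add_zero] <;>
    constructor <;> field_simp <;> nlinarith [pow_pos ha 2, pow_pos ha 3, pow_pos ha 4]

theorem square_HK_violation (s t : ℝ) (hst : |t| < |s|) :
    (Hsq s t).mulVec (PsiA s) = (4 - 2 * Real.sqrt (1 + s ^ 2)) • PsiA s ∧
    (∀ (μ : ℝ) (x : Fin 6 → ℝ), x ≠ 0 → (Hsq s t).mulVec x = μ • x →
      μ ≠ 4 - 2 * Real.sqrt (1 + s ^ 2) → 4 - 2 * Real.sqrt (1 + s ^ 2) < μ) ∧
    (∀ x : Fin 6 → ℝ, (Hsq s t).mulVec x = (4 - 2 * Real.sqrt (1 + s ^ 2)) • x →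
      ∃ c : ℝ, x = c • PsiA s) ∧
    (∀ r ∈ ({PsiA s 0 ^ 2 + PsiA s 1 ^ 2 + PsiA s 2 ^ 2,
              PsiA s 0 ^ 2 + PsiA s 3 ^ 2 + PsiA s 4 ^ 2,
              PsiA s 1 ^ 2 + PsiA s 3 ^ 2 + PsiA s 5 ^ 2,
              PsiA s 2 ^ 2 + PsiA s 4 ^ 2 + PsiA s 5 ^ 2} : Set ℝ),
        0 < r ∧ r < 1) := by
  set R := Real.sqrt (1 + s ^ 2)
  have hR : R ^ 2 = 1 + s ^ 2 := Real.sq_sqrt (by positivity)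
  have hQ : Real.sqrt (1 + t ^ 2) ^ 2 = 1 + t ^ 2 := Real.sq_sqrt (by positivity)
  have hQR : Real.sqrt (1 + t ^ 2) < R :=
    Real.sqrt_lt_sqrt (by positivity) (by linarith [sq_lt_sq.mpr hst])
  have hQ0 := Real.sqrt_nonneg (1 + t ^ 2)
  have hground : Hsq s t *ᵥ eigvecS s R = (4 - 2 * R) • eigvecS s R := Hsq_mulVec_eigvecS t hR
  have hlow {μ : ℝ} {x : Fin 6 → ℝ} (hx : Hsq s t *ᵥ x = μ • x) (hμ : μ ≤ 4 - 2 * R) :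
      x = x 3 • eigvecS s R :=
    Hsq_eigenvector_eq_smul hR hQ hx (by linarith) (by linarith) (by linarith) (by linarith)
  refine ⟨?_, fun μ x hx0 hx hμ => ?_, fun x hx => ?_, PsiA_occupations_mem_Ioo s⟩
  · rw [PsiA_eq_smul_eigvecS, mulVec_smul, hground, smul_comm]
  · refine lt_of_not_ge fun hle => hμ (smul_left_injective ℝ hx0 (hx.symm.trans ?_))
    rw [hlow hx hle, mulVec_smul, hground, smul_comm]
  · refine ⟨x 3 * (1 + sqAlpha s ^ 2), (hlow hx le_rfl).trans ?_⟩
    rw [PsiA_eq_smul_eigvecS, smul_smul, mul_assoc, mul_inv_cancel₀ (by positivity), mul_one]
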